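/- arXiv:math/0508278 — 5 statements merged into one kernel-verified Lean document; each statement's English description precedes it below -/
import Mathlib

section
/- For θ₀ ≠ 0, the function Φ_{θ₀}(θ) = p(|θ₀|) + (θ² − θ₀²)·p'(|θ₀|+)/(2|θ₀|) majorizes p(|θ|): Φ_{θ₀}(θ) ≥ p(|θ|) for all θ ∈ ℝ, with equality at θ = ±|θ₀|. -/
open Set Filter Topology

/-- Tangent line majorization for a concave function on `Ioi 0` with right
derivative `p' s` at `s`, for positive arguments. -/
lemma tangent_majorizes_pos
    (p p' : ℝ → ℝ)
    (hp_concave : ConcaveOn ℝ (Set.Ioi 0) p)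
    (hp_deriv : ∀ θ ∈ Set.Ioi (0 : ℝ), HasDerivWithinAt p (p' θ) (Set.Ioi θ) θ)
    {s t : ℝ} (hs : 0 < s) (ht : 0 < t) :
    p t ≤ p s + (t - s) * p' s := by
  have hconv : ConvexOn ℝ (Set.Ioi 0) (-p) := hp_concave.neg
  have hslope : Tendsto (slope p s) (𝓝[>] s) (𝓝 (p' s)) := by
    have h := (hasDerivWithinAt_iff_tendsto_slope).mp (hp_deriv s hs)
    simpa [Set.diff_singleton_eq_self (s := Set.Ioi s) (a := s)
      (notMem_Ioi_self)] using h
  rcases lt_trichotomy t s with hts | rfl | hst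
  · -- t < s : slope p s t ≥ p' s
    have key : p' s ≤ slope p s t := by
      refine le_of_tendsto hslope ?_
      filter_upwards [self_mem_nhdsWithin] with u hu
      have h := hconv.secant_mono (a := s) (x := t) (y := u)
        (Set.mem_Ioi.mpr hs) (Set.mem_Ioi.mpr ht) (lt_trans hs hu)
        (ne_of_lt hts) (ne_of_gt hu) (le_of_lt (lt_trans hts hu))
      simp only [Pi.neg_apply, slope_def_field] at h ⊢
      have : -((p t - p s) / (t - s)) ≤ -((p u - p s) / (u - s)) := by
        have e1 : (-p t - -p s) / (t - s) = -((p t - p s) / (t - s)) := by ring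
        have e2 : (-p u - -p s) / (u - s) = -((p u - p s) / (u - s)) := by ring
        rw [e1, e2] at h; exact h
      exact neg_le_neg_iff.mp this
    have hts' : t - s < 0 := by linarith
    have := mul_le_mul_of_nonpos_left key (le_of_lt hts')
    rw [slope_def_field] at this
    have : (t - s) * ((p t - p s) / (t - s)) ≤ (t - s) * p' s := this
    rw [mul_div_cancel₀ _ (by linarith : t - s ≠ 0)] at this
    linarith
  · simp
  · -- s < t : slope p s t ≤ p' s
    have key : slope p s t ≤ p' s := by
      refine ge_of_tendsto hslope ?_
      have hmem : Set.Ioo s t ∈ 𝓝[>] s := Ioo_mem_nhdsGT_of_mem ⟨le_refl s, hst⟩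
      filter_upwards [hmem] with u hu
      have h := hconv.secant_mono (a := s) (x := u) (y := t)
        (Set.mem_Ioi.mpr hs) (Set.mem_Ioi.mpr (lt_trans hs hu.1))
        (Set.mem_Ioi.mpr ht) (ne_of_gt hu.1) (ne_of_gt hst) (le_of_lt hu.2)
      simp only [Pi.neg_apply, slope_def_field] at h ⊢
      have e1 : (-p u - -p s) / (u - s) = -((p u - p s) / (u - s)) := by ring
      have e2 : (-p t - -p s) / (t - s) = -((p t - p s) / (t - s)) := by ring
      rw [e1, e2] at h
      exact neg_le_neg_iff.mp h
    have hst' : 0 < t - s := by linarith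
    have := mul_le_mul_of_nonneg_left key (le_of_lt hst')
    rw [slope_def_field, mul_div_cancel₀ _ (by linarith : t - s ≠ 0)] at this
    linarith

/-- For `θ₀ ≠ 0`, the quadratic `Φ_{θ₀}(θ) = p(|θ₀|) + (θ² − θ₀²)·p'(|θ₀|+)/(2|θ₀|)`
majorizes `p(|θ|)`: it dominates it everywhere, with equality at `θ = ±|θ₀|`. -/
theorem lqa_majorizes_penalty
    (p p' : ℝ → ℝ) (θ₀ : ℝ) (hθ₀ : θ₀ ≠ 0)
    (hp_cont : ContinuousWithinAt p (Set.Ici 0) 0)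
    (hp_mono : MonotoneOn p (Set.Ioi 0))
    (hp_concave : ConcaveOn ℝ (Set.Ioi 0) p)
    (hp_deriv : ∀ θ ∈ Set.Ioi (0 : ℝ), HasDerivWithinAt p (p' θ) (Set.Ioi θ) θ)
    (hp'_nonneg : ∀ θ ∈ Set.Ioi (0 : ℝ), 0 ≤ p' θ)
    (hp'_anti : AntitoneOn p' (Set.Ioi 0))
    (hp'_bdd : ∃ C : ℝ, ∀ θ ∈ Set.Ioi (0 : ℝ), p' θ ≤ C) :
    (∀ θ : ℝ, p |θ| ≤ p |θ₀| + (θ ^ 2 - θ₀ ^ 2) * p' |θ₀| / (2 * |θ₀|)) ∧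
    (p |θ₀| + ((|θ₀|) ^ 2 - θ₀ ^ 2) * p' |θ₀| / (2 * |θ₀|) = p |θ₀|) ∧
    (p |θ₀| + ((-|θ₀|) ^ 2 - θ₀ ^ 2) * p' |θ₀| / (2 * |θ₀|) = p |(-|θ₀|)|) := by
  set s := |θ₀| with hsdef
  have hs : 0 < s := abs_pos.mpr hθ₀
  have hsq : s ^ 2 = θ₀ ^ 2 := sq_abs θ₀
  -- tangent-line bound for all t ≥ 0
  have tangent : ∀ t : ℝ, 0 ≤ t → p t ≤ p s + (t - s) * p' s := by
    intro t ht
    rcases eq_or_lt_of_le ht with rfl | htpos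
    · -- t = 0: take the limit of the bound for positive arguments
      have h1 : Tendsto p (𝓝[>] (0:ℝ)) (𝓝 (p 0)) :=
        hp_cont.tendsto.mono_left (nhdsWithin_mono 0 Set.Ioi_subset_Ici_self)
      have h2 : Tendsto (fun u : ℝ => p s + (u - s) * p' s) (𝓝[>] (0:ℝ))
          (𝓝 (p s + (0 - s) * p' s)) := by
        apply Tendsto.mono_left _ nhdsWithin_le_nhds
        exact (tendsto_const_nhds.add (((continuous_id.sub continuous_const).mul
          continuous_const).tendsto 0))
      have hev : ∀ᶠ u in 𝓝[>] (0:ℝ), p u ≤ p s + (u - s) * p' s := by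
        filter_upwards [self_mem_nhdsWithin] with u hu
        exact tangent_majorizes_pos p p' hp_concave hp_deriv hs hu
      have := le_of_tendsto_of_tendsto h1 h2 hev
      simpa using this
    · exact tangent_majorizes_pos p p' hp_concave hp_deriv hs htpos
  refine ⟨?_, by rw [hsq]; ring, by rw [abs_neg, abs_abs, neg_pow, ← hsq]; ring_nf; rfl⟩
  intro θ
  have h1 : p |θ| ≤ p s + (|θ| - s) * p' s := tangent |θ| (abs_nonneg θ)
  have hfrac : |θ| - s ≤ (θ ^ 2 - θ₀ ^ 2) / (2 * s) := by
    rw [le_div_iff₀ (by linarith : (0:ℝ) < 2 * s)]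
    nlinarith [sq_nonneg (|θ| - s), sq_abs θ]
  have h2 : (|θ| - s) * p' s ≤ (θ ^ 2 - θ₀ ^ 2) / (2 * s) * p' s :=
    mul_le_mul_of_nonneg_right hfrac (hp'_nonneg s hs)
  have h3 : (θ ^ 2 - θ₀ ^ 2) / (2 * s) * p' s = (θ ^ 2 - θ₀ ^ 2) * p' s / (2 * s) := by ring
  linarith
end

section
/- For ε > 0 and θ₀ ∈ ℝ, the perturbed quadratic Φ_{θ₀,ε}(θ) = p_ε(|θ₀|) + (θ² − θ₀²)p'(|θ₀|+)/(2(ε+|θ₀|)) majorizes the perturbed penalty p_ε(|θ|) at θ₀, where p_ε(θ) = p(θ) − ε∫₀^θ p'(t)/(ε+t) dt. -/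
set_option maxHeartbeats 1000000

open Set intervalIntegral MeasureTheory

lemma lqa_aux (p p' : ℝ → ℝ) (ε : ℝ) (hε : 0 < ε)
    (hcont : ContinuousOn p (Set.Ici 0))
    (hp_deriv : ∀ θ ∈ Set.Ioi (0 : ℝ), HasDerivWithinAt p (p' θ) (Set.Ioi θ) θ)
    (hp'_nonneg : ∀ θ ∈ Set.Ici (0 : ℝ), 0 ≤ p' θ)
    (hp'_anti : AntitoneOn p' (Set.Ici 0))
    (u v : ℝ) (hu : 0 ≤ u) (hv : 0 ≤ v) :
    p v - ε * ∫ t in (0:ℝ)..v, p' t / (ε + t) ≤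
      (p u - ε * ∫ t in (0:ℝ)..u, p' t / (ε + t)) + (v ^ 2 - u ^ 2) * p' u / (2 * (ε + u)) := by
  have hεu : (0:ℝ) < ε + u := by linarith
  -- subsets
  have hsub : ∀ b c : ℝ, 0 ≤ b → 0 ≤ c → uIcc b c ⊆ Set.Ici 0 := by
    intro b c hb hc t ht
    have := ht.1
    simp only [Set.mem_Ici]
    exact le_trans (le_min hb hc) this
  have hcontinv : ∀ b c : ℝ, 0 ≤ b → 0 ≤ c →
      ContinuousOn (fun t : ℝ => t / (ε + t)) (uIcc b c) := by
    intro b c hb hc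
    apply ContinuousOn.div continuousOn_id (by fun_prop)
    intro t ht
    have : 0 ≤ t := hsub b c hb hc ht
    positivity
  have hintp' : ∀ b c : ℝ, 0 ≤ b → 0 ≤ c → IntervalIntegrable p' volume b c := by
    intro b c hb hc
    exact (hp'_anti.mono (hsub b c hb hc)).intervalIntegrable
  have hintg : ∀ b c : ℝ, 0 ≤ b → 0 ≤ c →
      IntervalIntegrable (fun t => p' t / (ε + t)) volume b c := by
    intro b c hb hc
    have := (hintp' b c hb hc).mul_continuousOn (g := fun t => (ε + t)⁻¹)
      (by
        apply ContinuousOn.inv₀ (by fun_prop)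
        intro t ht
        have : 0 ≤ t := hsub b c hb hc ht
        positivity)
    simpa [div_eq_mul_inv] using this
  have hintφ : ∀ b c : ℝ, 0 ≤ b → 0 ≤ c →
      IntervalIntegrable (fun t => p' t * (t / (ε + t))) volume b c := by
    intro b c hb hc
    exact (hintp' b c hb hc).mul_continuousOn (hcontinv b c hb hc)
  -- FTC for p
  have hftc : ∀ b c : ℝ, 0 ≤ b → b ≤ c → ∫ t in b..c, p' t = p c - p b := by
    intro b c hb hbc
    apply integral_eq_sub_of_hasDeriv_right_of_le hbc
      (hcont.mono (Set.Icc_subset_Ici_self.trans (by simp [Set.Ici_subset_Ici, hb])))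
      (fun t ht => hp_deriv t (lt_of_le_of_lt hb ht.1))
      (hintp' b c hb (hb.trans hbc))
  -- difference identity
  have hdiff : ∀ b c : ℝ, 0 ≤ b → b ≤ c →
      (p c - ε * ∫ t in (0:ℝ)..c, p' t / (ε + t)) -
        (p b - ε * ∫ t in (0:ℝ)..b, p' t / (ε + t)) =
      ∫ t in b..c, p' t * (t / (ε + t)) := by
    intro b c hb hbc
    have hc : 0 ≤ c := hb.trans hbc
    have h1 : (∫ t in (0:ℝ)..c, p' t / (ε + t)) - ∫ t in (0:ℝ)..b, p' t / (ε + t)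
        = ∫ t in b..c, p' t / (ε + t) :=
      integral_interval_sub_left (hintg 0 c le_rfl hc) (hintg 0 b le_rfl hb)
    have h2 : (∫ t in b..c, p' t) - ε * ∫ t in b..c, p' t / (ε + t)
        = ∫ t in b..c, p' t * (t / (ε + t)) := by
      rw [← intervalIntegral.integral_const_mul, ← integral_sub (hintp' b c hb hc)
        ((hintg b c hb hc).const_mul ε)]
      apply integral_congr
      intro t ht
      have ht0 : (0:ℝ) < ε + t := by
        have : 0 ≤ t := hsub b c hb hc ht
        positivity
      field_simp
      ring
    calc (p c - ε * ∫ t in (0:ℝ)..c, p' t / (ε + t)) -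
        (p b - ε * ∫ t in (0:ℝ)..b, p' t / (ε + t))
        = (p c - p b) - ε * ((∫ t in (0:ℝ)..c, p' t / (ε + t)) -
            ∫ t in (0:ℝ)..b, p' t / (ε + t)) := by ring
      _ = (∫ t in b..c, p' t) - ε * ∫ t in b..c, p' t / (ε + t) := by
          rw [h1, hftc b c hb hbc]
      _ = _ := h2
  -- reference integral value
  have href : ∀ b c : ℝ, (∫ t in b..c, p' u * (t / (ε + u)))
      = (c ^ 2 - b ^ 2) * p' u / (2 * (ε + u)) := by
    intro b c
    have : (fun t : ℝ => p' u * (t / (ε + u))) = fun t : ℝ => (p' u / (ε + u)) * t := by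
      funext t; field_simp
    rw [this, intervalIntegral.integral_const_mul, integral_id]
    field_simp
  have hintψ : ∀ b c : ℝ, 0 ≤ b → 0 ≤ c →
      IntervalIntegrable (fun t : ℝ => p' u * (t / (ε + u))) volume b c := by
    intro b c hb hc
    exact (continuousOn_const.mul ((continuousOn_id.div continuousOn_const) (fun t _ => ne_of_gt hεu))).intervalIntegrable
  rcases le_total u v with huv | huv
  · rw [← sub_le_iff_le_add']
    rw [hdiff u v hu huv, ← href u v]
    refine integral_mono_on huv (hintφ u v hu hv) (hintψ u v hu hv) ?_
    intro t ht
    have ht0 : 0 ≤ t := hu.trans ht.1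
    have hεt : (0:ℝ) < ε + t := by positivity
    have h1 : p' t ≤ p' u := hp'_anti hu ht0 ht.1
    have h2 : t / (ε + t) ≤ t / (ε + u) := by
      apply div_le_div_of_nonneg_left ht0 hεu
      linarith [ht.1]
    have h3 : 0 ≤ t / (ε + t) := by positivity
    exact mul_le_mul h1 h2 h3 (hp'_nonneg u hu)
  · have hmono : (∫ t in v..u, p' u * (t / (ε + u))) ≤ ∫ t in v..u, p' t * (t / (ε + t)) := by
      refine integral_mono_on huv (hintψ v u hv hu) (hintφ v u hv hu) ?_
      intro t ht
      have ht0 : 0 ≤ t := hv.trans ht.1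
      have hεt : (0:ℝ) < ε + t := by positivity
      have h1 : p' u ≤ p' t := hp'_anti ht0 hu ht.2
      have h2 : t / (ε + u) ≤ t / (ε + t) := by
        apply div_le_div_of_nonneg_left ht0 hεt
        linarith [ht.2]
      have h3 : 0 ≤ t / (ε + u) := by positivity
      exact mul_le_mul h1 h2 h3 (hp'_nonneg t ht0)
    rw [href v u] at hmono
    have hid := hdiff v u hv huv
    have hq : (u ^ 2 - v ^ 2) * p' u / (2 * (ε + u))
        = -((v ^ 2 - u ^ 2) * p' u / (2 * (ε + u))) := by ring
    rw [hq] at hmono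
    linarith



/-- For `ε > 0` and any real `θ₀`, the perturbed quadratic
`Φ_{θ₀,ε}(θ) = p_ε(|θ₀|) + (θ² − θ₀²)p'(|θ₀|+)/(2(ε+|θ₀|))` majorizes the perturbed penalty
`p_ε(|θ|)` at `θ₀`, where `p_ε(θ) = p(θ) − ε∫₀^θ p'(t+)/(ε+t) dt`. -/
theorem perturbed_lqa_majorizes
    (p p' : ℝ → ℝ) (ε θ₀ : ℝ) (hε : 0 < ε)
    (hp_cont : ContinuousWithinAt p (Set.Ici 0) 0)
    (hp_mono : MonotoneOn p (Set.Ioi 0))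
    (hp_concave : ConcaveOn ℝ (Set.Ioi 0) p)
    (hp_deriv : ∀ θ ∈ Set.Ioi (0 : ℝ), HasDerivWithinAt p (p' θ) (Set.Ioi θ) θ)
    (hp'_nonneg : ∀ θ ∈ Set.Ici (0 : ℝ), 0 ≤ p' θ)
    (hp'_anti : AntitoneOn p' (Set.Ici 0)) :
    let pε : ℝ → ℝ := fun θ => p θ - ε * ∫ t in (0 : ℝ)..θ, p' t / (ε + t)
    let Φ : ℝ → ℝ := fun θ => pε |θ₀| + (θ ^ 2 - θ₀ ^ 2) * p' |θ₀| / (2 * (ε + |θ₀|))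
    (∀ θ : ℝ, pε |θ| ≤ Φ θ) ∧ Φ θ₀ = pε |θ₀| := by
  intro pε Φ
  have hcont : ContinuousOn p (Set.Ici 0) := by
    intro t ht
    rcases eq_or_lt_of_le (Set.mem_Ici.mp ht) with h0 | h0
    · rw [← h0]; exact hp_cont
    · exact ((hp_concave.continuousOn isOpen_Ioi t h0).continuousAt
        (Ioi_mem_nhds h0)).continuousWithinAt
  constructor
  · intro θ
    have := lqa_aux p p' ε hε hcont hp_deriv hp'_nonneg hp'_anti |θ₀| |θ|
      (abs_nonneg _) (abs_nonneg _)
    simpa [pε, Φ, sq_abs] using this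
  · simp only [Φ, pε, sub_self, zero_mul, zero_div, add_zero]
end

section
/- For the perturbed penalty p_ε, one has the bound |p_ε(|θ|) − p(|θ|)| ≤ ε·log(1 + |θ|/ε)·p'(0+) for all θ and ε > 0. -/
/-- For the perturbed penalty `p_ε`, one has
`|p_ε(|θ|) − p(|θ|)| ≤ ε·log(1 + |θ|/ε)·p'(0+)` for all `θ` and `ε > 0`. -/
theorem perturbed_penalty_bound
    (p p' : ℝ → ℝ) (ε : ℝ) (hε : 0 < ε)
    (hp'_nonneg : ∀ t ∈ Set.Ici (0 : ℝ), 0 ≤ p' t)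
    (hp'_anti : AntitoneOn p' (Set.Ici 0)) :
    let pε : ℝ → ℝ := fun θ => p θ - ε * ∫ t in (0 : ℝ)..θ, p' t / (ε + t)
    ∀ θ : ℝ, abs (pε |θ| - p |θ|) ≤ ε * Real.log (1 + |θ| / ε) * p' 0 := by
  intro pε θ
  set a := |θ| with ha
  have ha0 : (0:ℝ) ≤ a := abs_nonneg θ
  have hsub : Set.uIcc (0:ℝ) a ⊆ Set.Ici 0 := by
    rw [Set.uIcc_of_le ha0]; exact fun x hx => hx.1
  have hcont : ContinuousOn (fun t => (ε + t)⁻¹) (Set.uIcc (0:ℝ) a) := by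
    apply ContinuousOn.inv₀ (by fun_prop)
    intro x hx
    have : 0 ≤ x := hsub hx
    positivity
  have hint : IntervalIntegrable (fun t => p' t / (ε + t)) MeasureTheory.volume 0 a := by
    simp_rw [div_eq_mul_inv]
    exact ((hp'_anti.mono hsub).intervalIntegrable).mul_continuousOn hcont
  have hint2 : IntervalIntegrable (fun t => p' 0 * (ε + t)⁻¹) MeasureTheory.volume 0 a :=
    (hcont.const_smul (p' 0)).intervalIntegrable
  have hlog : (∫ t in (0:ℝ)..a, (ε + t)⁻¹) = Real.log (1 + a / ε) := by
    have hderiv : ∀ t ∈ Set.uIcc (0:ℝ) a,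
        HasDerivAt (fun t => Real.log (ε + t)) (ε + t)⁻¹ t := by
      intro t ht
      have h0 : 0 ≤ t := hsub ht
      have h1 : HasDerivAt (fun t : ℝ => ε + t) 1 t := (hasDerivAt_id t).const_add ε
      simpa [Function.comp_def] using (Real.hasDerivAt_log (by positivity)).comp t h1
    rw [intervalIntegral.integral_eq_sub_of_hasDerivAt hderiv hcont.intervalIntegrable]
    have h1 : 1 + a / ε = (ε + a) / ε := by field_simp
    rw [h1, Real.log_div (by positivity) (by positivity)]
    simp
  have hptle : ∀ t ∈ Set.Icc (0:ℝ) a, p' t / (ε + t) ≤ p' 0 * (ε + t)⁻¹ := by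
    intro t ht
    rw [div_eq_mul_inv]
    exact mul_le_mul_of_nonneg_right (hp'_anti (Set.mem_Ici.mpr le_rfl) ht.1 ht.1)
      (by have := ht.1; positivity)
  have hmono : (∫ t in (0:ℝ)..a, p' t / (ε + t)) ≤ ∫ t in (0:ℝ)..a, p' 0 * (ε + t)⁻¹ :=
    intervalIntegral.integral_mono_on ha0 hint hint2 hptle
  have hval : (∫ t in (0:ℝ)..a, p' 0 * (ε + t)⁻¹) = p' 0 * Real.log (1 + a / ε) := by
    rw [intervalIntegral.integral_const_mul, hlog]
  have hnn : 0 ≤ ∫ t in (0:ℝ)..a, p' t / (ε + t) := by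
    apply intervalIntegral.integral_nonneg ha0
    intro t ht
    have h0 : 0 ≤ t := ht.1
    have := hp'_nonneg t h0
    positivity
  have : |pε a - p a| = ε * ∫ t in (0:ℝ)..a, p' t / (ε + t) := by
    simp only [pε]
    rw [abs_sub_comm]
    rw [show p a - (p a - ε * ∫ t in (0:ℝ)..a, p' t / (ε + t))
        = ε * ∫ t in (0:ℝ)..a, p' t / (ε + t) by ring]
    exact abs_of_nonneg (by positivity)
  rw [this]
  calc ε * ∫ t in (0:ℝ)..a, p' t / (ε + t)
      ≤ ε * (p' 0 * Real.log (1 + a / ε)) := by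
        apply mul_le_mul_of_nonneg_left _ hε.le
        rw [← hval]; exact hmono
    _ = ε * Real.log (1 + a / ε) * p' 0 := by ring
end

section
/- If A is a symmetric negative definite d×d matrix and B is symmetric negative semidefinite, then all eigenvalues of (A + B)⁻¹B lie in the interval [0, 1). -/
/-!
An eigenvector `x` of `(A + B)⁻¹ * B` for `μ` satisfies `B x = μ (A + B) x`. Pairing with `x` gives
`b = μ (a + b)` for `a = xᵀ A x < 0` and `b = xᵀ B x ≤ 0`, which forces `0 ≤ μ < 1`.
Negative definiteness of `A + B` is also what makes it invertible.
-/

open Matrix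

namespace Matrix

variable {n K : Type*} [Fintype n] [DecidableEq n] [Field K]

theorem exists_mulVec_eq_smul_of_mem_spectrum {M : Matrix n n K} {μ : K}
    (hμ : μ ∈ spectrum K M) : ∃ x ≠ 0, M *ᵥ x = μ • x := by
  rw [← spectrum_toLin', ← Module.End.hasEigenvalue_iff_mem_spectrum] at hμ
  obtain ⟨x, hx⟩ := hμ.exists_hasEigenvector
  exact ⟨x, hx.2, by simpa using hx.apply_eq_smul⟩

theorem isUnit_of_dotProduct_mulVec_ne_zero {M : Matrix n n K}
    (hM : ∀ x, x ≠ 0 → x ⬝ᵥ M *ᵥ x ≠ 0) : IsUnit M := by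
  rw [isUnit_iff_isUnit_det, isUnit_iff_ne_zero]
  intro hdet
  obtain ⟨x, hx, hMx⟩ := exists_mulVec_eq_zero_iff.2 hdet
  exact hM x hx (by rw [hMx, dotProduct_zero])

theorem exists_mulVec_eq_smul_mulVec_of_mem_spectrum_inv_mul {M B : Matrix n n K} {μ : K}
    (hM : IsUnit M) (hμ : μ ∈ spectrum K (M⁻¹ * B)) : ∃ x ≠ 0, B *ᵥ x = μ • M *ᵥ x := by
  obtain ⟨x, hx, hBx⟩ := exists_mulVec_eq_smul_of_mem_spectrum hμ
  refine ⟨x, hx, ?_⟩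
  rw [← mulVec_smul, ← hBx, mulVec_mulVec,
    mul_nonsing_inv_cancel_left _ _ ((isUnit_iff_isUnit_det M).1 hM)]

end Matrix

theorem mem_Ico_of_eq_mul_add {K : Type*} [Field K] [LinearOrder K] [IsStrictOrderedRing K]
    {a b μ : K} (ha : a < 0) (hb : b ≤ 0) (h : b = μ * (a + b)) : μ ∈ Set.Ico 0 1 := by
  constructor <;> nlinarith

theorem eigenvalues_in_Ico_general
    {d : ℕ} (A B : Matrix (Fin d) (Fin d) ℝ)
    (hA_negdef : ∀ x : Fin d → ℝ, x ≠ 0 → x ⬝ᵥ A.mulVec x < 0)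
    (hB_negsemidef : ∀ x : Fin d → ℝ, x ⬝ᵥ B.mulVec x ≤ 0) :
    ∀ μ ∈ spectrum ℝ ((A + B)⁻¹ * B), μ ∈ Set.Ico (0 : ℝ) 1 := by
  intro μ hμ
  have hAB : ∀ x, x ≠ 0 → x ⬝ᵥ (A + B) *ᵥ x ≠ 0 := fun x hx => by
    rw [add_mulVec, dotProduct_add]
    linarith [hA_negdef x hx, hB_negsemidef x]
  obtain ⟨x, hx, hBx⟩ := exists_mulVec_eq_smul_mulVec_of_mem_spectrum_inv_mul
    (isUnit_of_dotProduct_mulVec_ne_zero hAB) hμ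
  refine mem_Ico_of_eq_mul_add (hA_negdef x hx) (hB_negsemidef x) ?_
  rw [← dotProduct_add, ← add_mulVec, ← smul_eq_mul, ← dotProduct_smul, ← hBx]

/-- If `A` is symmetric negative definite and `B` is symmetric negative semidefinite,
then every real eigenvalue of `(A + B)⁻¹ * B` lies in `[0, 1)`. -/
theorem eigenvalues_in_Ico
    {d : ℕ} (A B : Matrix (Fin d) (Fin d) ℝ)
    (hA_symm : A.IsSymm) (hB_symm : B.IsSymm)
    (hA_negdef : ∀ x : Fin d → ℝ, x ≠ 0 → x ⬝ᵥ A.mulVec x < 0)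
    (hB_negsemidef : ∀ x : Fin d → ℝ, x ⬝ᵥ B.mulVec x ≤ 0) :
    ∀ μ ∈ spectrum ℝ ((A + B)⁻¹ * B), μ ∈ Set.Ico (0 : ℝ) 1 :=
  eigenvalues_in_Ico_general A B hA_negdef hB_negsemidef
end

section
/- The perturbed L₁ penalty term β ↦ −n·Σⱼ p_{λ,ε}(|βⱼ|) with p(θ) = λθ yields p_{λ,ε}(|θ|) = λ|θ| − ελ·log(1 + |θ|/ε), and this function of θ is convex on ℝ. -/
open intervalIntegral in
private theorem aux_integral_inv_of_pos {a b : ℝ} (ha : 0 < a) (hb : 0 < b) :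
    ∫ x in a..b, x⁻¹ = Real.log (b / a) := integral_inv_of_pos ha hb

/-- For the L₁ penalty `p(θ) = λθ`, the perturbed penalty is
`p_{λ,ε}(θ) = λθ − ελ·log(1 + θ/ε)`, and `θ ↦ p_{λ,ε}(|θ|)` is convex on `ℝ`. -/
theorem perturbed_l1_penalty_convex (lam ε : ℝ) (hlam : 0 < lam) (hε : 0 < ε) :
    (∀ θ : ℝ, 0 ≤ θ →
      lam * θ - ε * ∫ t in (0 : ℝ)..θ, lam / (ε + t)
        = lam * θ - ε * lam * Real.log (1 + θ / ε)) ∧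
    ConvexOn ℝ Set.univ (fun θ : ℝ => lam * |θ| - ε * lam * Real.log (1 + |θ| / ε)) := by
  have hlogshift : ∀ x : ℝ, 0 ≤ x →
      Real.log (1 + x / ε) = Real.log (ε + x) - Real.log ε := by
    intro x hx
    have h1 : 1 + x / ε = (ε + x) / ε := by field_simp
    rw [h1, Real.log_div (by positivity) (ne_of_gt hε)]
  constructor
  · intro θ hθ
    have h1 : (∫ t in (0 : ℝ)..θ, lam / (ε + t)) = lam * Real.log (1 + θ / ε) := by
      have h2 : (∫ t in (0 : ℝ)..θ, lam / (ε + t)) = lam * ∫ t in (0 : ℝ)..θ, (ε + t)⁻¹ := by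
        rw [← intervalIntegral.integral_const_mul]
        simp [div_eq_mul_inv]
      rw [h2]
      have h3 : (∫ t in (0 : ℝ)..θ, (ε + t)⁻¹) = ∫ x in (ε + 0)..(ε + θ), x⁻¹ :=
        intervalIntegral.integral_comp_add_left (fun x => x⁻¹) ε
      rw [h3, add_zero, aux_integral_inv_of_pos hε (by linarith)]
      congr 2
      field_simp
    rw [h1]; ring
  · -- convexity
    set g : ℝ → ℝ := fun x => lam * x - ε * lam * Real.log (1 + x / ε) with hg_def
    have hlog : ConcaveOn ℝ (Set.Ici (0:ℝ)) (fun x => Real.log (ε + x)) := by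
      refine ⟨convex_Ici 0, ?_⟩
      intro x hx y hy a b ha hb hab
      have hx' : ε + x ∈ Set.Ioi (0:ℝ) := by simp at hx ⊢; linarith
      have hy' : ε + y ∈ Set.Ioi (0:ℝ) := by simp at hy ⊢; linarith
      have h := strictConcaveOn_log_Ioi.concaveOn.2 hx' hy' ha hb hab
      have heq : a • (ε + x) + b • (ε + y) = ε + (a • x + b • y) := by
        simp only [smul_eq_mul]; nlinarith [hab]
      rwa [heq] at h
    have hconv : ConvexOn ℝ (Set.Ici (0:ℝ)) g := by
      have h1 : ConvexOn ℝ (Set.Ici (0:ℝ)) (fun x : ℝ => lam • id x) :=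
        (convexOn_id (convex_Ici 0)).smul hlam.le
      have h2 : ConvexOn ℝ (Set.Ici (0:ℝ))
          (fun x => -((ε * lam) • Real.log (ε + x))) :=
        (hlog.smul (by positivity : (0:ℝ) ≤ ε * lam)).neg
      have h3 := (h1.add h2).add_const (ε * lam * Real.log ε)
      refine h3.congr fun x hx => ?_
      have hx0 : (0:ℝ) ≤ x := hx
      simp only [Pi.add_apply, smul_eq_mul, id_eq, hg_def]
      rw [hlogshift x hx0]
      ring
    have hmono : MonotoneOn g (Set.Ici (0:ℝ)) := by
      intro x hx y hy hxy
      have hx0 : (0:ℝ) ≤ x := hx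
      set A : ℝ := 1 + x / ε with hA
      set B : ℝ := 1 + y / ε with hB
      have hA1 : (1:ℝ) ≤ A := by
        have : 0 ≤ x / ε := by positivity
        simp [hA]; linarith
      have hApos : 0 < A := by linarith
      have hBpos : 0 < B := by
        have hy0 : (0:ℝ) ≤ y := le_trans hx0 hxy
        have : 0 ≤ y / ε := by positivity
        simp [hB]; linarith
      have hkey : Real.log B - Real.log A ≤ B / A - 1 := by
        have := Real.log_le_sub_one_of_pos (div_pos hBpos hApos)
        rwa [Real.log_div (ne_of_gt hBpos) (ne_of_gt hApos)] at this
      have hBA : ε * (B - A) = y - x := by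
        simp only [hA, hB]; field_simp; ring
      -- ε * (B/A - 1) = (y - x)/A ≤ y - x
      have h4 : ε * (B / A - 1) ≤ y - x := by
        have h5 : ε * (B / A - 1) = (y - x) / A := by
          field_simp
          nlinarith [hBA]
        rw [h5]
        have hyx : 0 ≤ y - x := by linarith
        exact div_le_self hyx hA1
      simp only [hg_def]
      have h6 : ε * lam * (Real.log B - Real.log A) ≤ lam * (y - x) := by
        have h7 : ε * (Real.log B - Real.log A) ≤ y - x :=
          le_trans (by nlinarith [hkey]) h4
        nlinarith [h7]
      nlinarith [h6]
    have himg : (fun θ : ℝ => |θ|) '' Set.univ = Set.Ici (0:ℝ) := by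
      rw [Set.image_univ]
      ext x
      simp only [Set.mem_range, Set.mem_Ici]
      constructor
      · rintro ⟨y, rfl⟩; exact abs_nonneg y
      · intro hx; exact ⟨x, abs_of_nonneg hx⟩
    have habs : ConvexOn ℝ Set.univ (fun θ : ℝ => |θ|) := by
      exact (convexOn_univ_norm : ConvexOn ℝ Set.univ (norm : ℝ → ℝ))
    have := ConvexOn.comp (f := fun θ : ℝ => |θ|) (himg ▸ hconv) habs (himg ▸ hmono)
    exact this
end
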